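/- arXiv:1907.09212 — 2 statements merged into one kernel-verified Lean document; each statement's English description precedes it below -/
import Mathlib

section
/- Let α be a type of atoms, let G be a ground program over α in which every rule has a finite positive body, let E ⊆ G be an embedding program for G, and let A be an answer set of G. Then the FLP reducts of G and of E with respect to A coincide: G^A = E^A. -/
structure GroundRule (α : Type*) where
  head : Set α
  posBody : Set α
  negBody : Set α

namespace GroundRule

variable {α : Type*}

/-- `Heads R` is the set of all head atoms of rules in `R`. -/
def Heads (R : Set (GroundRule α)) : Set α := ⋃ r ∈ R, r.head

/-- `R` body-embeds `r` (written `R ⊢_b r`). -/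
def BodyEmbeds (R : Set (GroundRule α)) (r : GroundRule α) : Prop :=
  ∀ a ∈ r.posBody, ∃ r' ∈ R, a ∈ r'.head

/-- `R` embeds `r` (written `R ⊢ r`): either `R` does not body-embed `r`,
or `R` head-embeds `r` (i.e. `r ∈ R`). -/
def Embeds (R : Set (GroundRule α)) (r : GroundRule α) : Prop :=
  ¬ BodyEmbeds R r ∨ r ∈ R

/-- `E` is an embedding program for the ground program `G`. -/
def IsEmbeddingProgram (G E : Set (GroundRule α)) : Prop :=
  E ⊆ G ∧ ∀ r ∈ G, Embeds E r

/-- The fact rule `a.` for an atom `a`. -/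
def factRule (a : α) : GroundRule α := ⟨{a}, ∅, ∅⟩

/-- `factRules F` is the set of fact rules `{a. : a ∈ F}`. -/
def factRules (F : Set α) : Set (GroundRule α) := factRule '' F

/-- The instantiation operator `Inst(P, S) = {r ∈ P : B⁺(r) ⊆ S}`. -/
def Inst (P : Set (GroundRule α)) (S : Set α) : Set (GroundRule α) :=
  {r ∈ P | r.posBody ⊆ S}

/-- Interpretation `I` satisfies the body of `r`. -/
def SatBody (I : Set α) (r : GroundRule α) : Prop :=
  r.posBody ⊆ I ∧ r.negBody ∩ I = ∅

/-- Interpretation `I` satisfies the rule `r`. -/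
def SatRule (I : Set α) (r : GroundRule α) : Prop :=
  ¬ SatBody I r ∨ (r.head ∩ I).Nonempty

/-- `I` is a model of the ground program `G`. -/
def IsModel (I : Set α) (G : Set (GroundRule α)) : Prop :=
  ∀ r ∈ G, SatRule I r

/-- FLP reduct `G^I = {r ∈ G : I ⊨ B(r)}`. -/
def reduct (G : Set (GroundRule α)) (I : Set α) : Set (GroundRule α) :=
  {r ∈ G | SatBody I r}

/-- `A` is an answer set of `G`: `A` is a model of `G^A` minimal w.r.t. `⊆`. -/
def IsAnswerSet (G : Set (GroundRule α)) (A : Set α) : Prop :=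
  IsModel A (reduct G A) ∧ ∀ B, B ⊂ A → ¬ IsModel B (reduct G A)

/-- `AS G` is the set of all answer sets of `G`. -/
def AS (G : Set (GroundRule α)) : Set (Set α) := {A | IsAnswerSet G A}

theorem Heads_mono {R R' : Set (GroundRule α)} (h : R ⊆ R') : Heads R ⊆ Heads R' := by
  intro a ha
  simp only [Heads, Set.mem_iUnion, exists_prop] at ha ⊢
  obtain ⟨r, hr, har⟩ := ha
  exact ⟨r, h hr, har⟩

/-- The monotone operator `R ↦ Inst(P, Heads(R) ∪ F)`. -/
def InstOp (P : Set (GroundRule α)) (F : Set α) :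
    Set (GroundRule α) →o Set (GroundRule α) where
  toFun R := Inst P (Heads R ∪ F)
  monotone' := fun _ _ h _ hr =>
    ⟨hr.1, hr.2.trans (Set.union_subset_union_left F (Heads_mono h))⟩

/-- `Inst^∞(P, F)`: the least fixpoint of `R ↦ Inst(P, Heads(R) ∪ F)`. -/
def InstInf (P : Set (GroundRule α)) (F : Set α) : Set (GroundRule α) :=
  OrderHom.lfp (InstOp P F)

end GroundRule

open GroundRule

/-!
The atoms of an answer set `A` of `G` are all derived by heads of `E`: the rules of `G^A` whose
body holds in `A ∩ Heads E` are body-embedded by `E`, hence lie in `E`, so `A ∩ Heads E` is a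
model of `G^A`, and minimality of `A` forces `A ⊆ Heads E`. Once `A ⊆ Heads E`, every rule of
`G^A` is body-embedded by `E` and therefore belongs to `E^A`.
-/

namespace GroundRule

variable {α : Type*} {G E : Set (GroundRule α)} {A : Set α} {r : GroundRule α}

theorem mem_Heads {R : Set (GroundRule α)} {a : α} : a ∈ Heads R ↔ ∃ r ∈ R, a ∈ r.head := by
  simp only [Heads, Set.mem_iUnion, exists_prop]

theorem bodyEmbeds_iff_posBody_subset_Heads {R : Set (GroundRule α)} :
    BodyEmbeds R r ↔ r.posBody ⊆ Heads R := by
  simp only [BodyEmbeds, Set.subset_def, mem_Heads]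

theorem IsEmbeddingProgram.mem_of_posBody_subset_Heads (hE : IsEmbeddingProgram G E)
    (hr : r ∈ G) (hbody : r.posBody ⊆ Heads E) : r ∈ E :=
  (hE.2 r hr).resolve_left fun h => h (bodyEmbeds_iff_posBody_subset_Heads.2 hbody)

theorem reduct_mono_left {I : Set α} (h : E ⊆ G) : reduct E I ⊆ reduct G I :=
  fun _ hr => ⟨h hr.1, hr.2⟩

theorem IsEmbeddingProgram.reduct_eq_of_subset_Heads (hE : IsEmbeddingProgram G E)
    (hA : A ⊆ Heads E) : reduct G A = reduct E A := by
  refine (reduct_mono_left hE.1).antisymm' fun r hr => ⟨?_, hr.2⟩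
  exact hE.mem_of_posBody_subset_Heads hr.1 (hr.2.1.trans hA)

theorem IsEmbeddingProgram.isModel_inter_Heads (hE : IsEmbeddingProgram G E)
    (hA : IsModel A (reduct G A)) : IsModel (A ∩ Heads E) (reduct G A) := by
  intro r hr
  by_cases hbody : SatBody (A ∩ Heads E) r
  · have hrE : r ∈ E :=
      hE.mem_of_posBody_subset_Heads hr.1 (hbody.1.trans Set.inter_subset_right)
    obtain ⟨a, haH, haA⟩ := (hA r hr).resolve_left (not_not.2 hr.2)
    exact Or.inr ⟨a, haH, haA, mem_Heads.2 ⟨r, hrE, haH⟩⟩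
  · exact Or.inl hbody

theorem IsAnswerSet.subset_Heads (hA : IsAnswerSet G A) (hE : IsEmbeddingProgram G E) :
    A ⊆ Heads E := by
  by_contra hsub
  exact hA.2 _ (Set.inter_ssubset_left_iff.2 hsub) (hE.isModel_inter_Heads hA.1)

end GroundRule

theorem reduct_eq_of_answerSet_of_whole_general {α : Type*} (G E : Set (GroundRule α))
    (hE : IsEmbeddingProgram G E)
    (A : Set α) (hA : IsAnswerSet G A) :
    reduct G A = reduct E A :=
  hE.reduct_eq_of_subset_Heads (hA.subset_Heads hE)

/-- if `E` is an embedding program for `G` (with finite positive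
bodies) and `A` an answer set of `G`, then `G^A = E^A`. -/
theorem reduct_eq_of_answerSet_of_whole {α : Type*} (G E : Set (GroundRule α))
    (hfin : ∀ r ∈ G, r.posBody.Finite)
    (hE : IsEmbeddingProgram G E)
    (A : Set α) (hA : IsAnswerSet G A) :
    reduct G A = reduct E A :=
  reduct_eq_of_answerSet_of_whole_general G E hE A hA
end

section
/- Let α be a type of atoms, let P be a ground program over α, and let F ⊆ F' ⊆ α be two sets of atoms (facts); let F̂ denote the set of fact rules {a. : a ∈ F}. Let Inst^∞(P,F') denote the least fixpoint of the monotone operator R ↦ Inst(P, Heads(R) ∪ F') on subsets of P, where Inst(P, S) = {r ∈ P : B⁺(r) ⊆ S}. Then Inst^∞(P,F') ∪ F̂ is an embedding program for P ∪ F̂. -/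
namespace GroundRule

variable {α : Type*}

theorem heads_union (R R' : Set (GroundRule α)) : Heads (R ∪ R') = Heads R ∪ Heads R' :=
  Set.biUnion_union R R' head

theorem heads_factRules (F : Set α) : Heads (factRules F) = F := by
  simp only [Heads, factRules, factRule, Set.biUnion_image, Set.biUnion_of_singleton]

theorem bodyEmbeds_iff {R : Set (GroundRule α)} {r : GroundRule α} :
    BodyEmbeds R r ↔ r.posBody ⊆ Heads R := by
  simp only [BodyEmbeds, Heads, Set.subset_def, Set.mem_iUnion₂, exists_prop]

theorem isEmbeddingProgram_iff {G E : Set (GroundRule α)} :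
    IsEmbeddingProgram G E ↔ E ⊆ G ∧ ∀ r ∈ G, r.posBody ⊆ Heads E → r ∈ E := by
  simp only [IsEmbeddingProgram, Embeds, bodyEmbeds_iff, or_iff_not_imp_left, not_not]

theorem inst_instInf (P : Set (GroundRule α)) (F : Set α) :
    Inst P (Heads (InstInf P F) ∪ F) = InstInf P F :=
  OrderHom.map_lfp (InstOp P F)

theorem instInf_subset (P : Set (GroundRule α)) (F : Set α) : InstInf P F ⊆ P := by
  rw [← inst_instInf]
  exact Set.sep_subset P _

theorem mem_instInf {P : Set (GroundRule α)} {F : Set α} {r : GroundRule α} (hr : r ∈ P)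
    (hbody : r.posBody ⊆ Heads (InstInf P F) ∪ F) : r ∈ InstInf P F := by
  rw [← inst_instInf]
  exact ⟨hr, hbody⟩

end GroundRule

open GroundRule

/-- for `F ⊆ F'`, the set `Inst^∞(P,F') ∪ F̂` is an embedding
program for `P ∪ F̂`. -/
theorem instInf_union_facts_isEmbedding {α : Type*} (P : Set (GroundRule α))
    (F F' : Set α) (h : F ⊆ F') :
    IsEmbeddingProgram (P ∪ factRules F) (InstInf P F' ∪ factRules F) := by
  rw [isEmbeddingProgram_iff, heads_union, heads_factRules]
  refine ⟨Set.union_subset_union_left _ (instInf_subset P F'), ?_⟩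
  rintro r (hrP | hrF) hbody
  · exact Or.inl (mem_instInf hrP (hbody.trans (Set.union_subset_union_right _ h)))
  · exact Or.inr hrF
end
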